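/- arXiv:1302.0301 — 2 statements merged into one kernel-verified Lean document; each statement's English description precedes it below -/
import Mathlib

section
/- Let I and J be non-empty subsets of {1,...,n}. The spaces V_I = K·D_I ⊕ NT_n(K) and V_J = K·D_J ⊕ NT_n(K) are similar (conjugate by an element of GL_n(K)) if and only if I = J. -/
/-!
If `P V_I P⁻¹ = V_J`, then for `i < j` the matrix `P⁻¹ E_ij P` lies in `V_I`, so it is upper
triangular and, being nilpotent, has zero diagonal. Its `(k, l)` entry is `P⁻¹_ki P_jl`, so a
nonzero `P_jl` with `l < j` would make the first `j` columns of `P⁻¹` vanish in rows `≥ l`,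
forcing `det P⁻¹ = 0`. Hence `P` and, symmetrically, `P⁻¹` are upper triangular, and
conjugating an upper triangular matrix by `P` keeps its diagonal. Applied to `D_I ∈ V_I`, whose
conjugate must vanish on the diagonal outside `J`, this gives `I ⊆ J`; conjugating back gives
`J ⊆ I`.
-/

/-- Membership in `V_I = K·D_I ⊕ NT_n(K)`. -/
def memVI {K : Type*} [Field K] {n : ℕ} (I : Set (Fin n))
    (M : Matrix (Fin n) (Fin n) K) : Prop :=
  (∀ i j : Fin n, j < i → M i j = 0) ∧ (∀ i : Fin n, i ∉ I → M i i = 0) ∧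
    (∀ i ∈ I, ∀ j ∈ I, M i i = M j j)

namespace Matrix

variable {m R : Type*}

theorem mul_single_mul_apply [Fintype m] [DecidableEq m] [NonUnitalNonAssocSemiring R]
    (A B : Matrix m m R) (i j k l : m) (c : R) :
    (A * single i j c * B) k l = A k i * c * B j l := by
  simp [mul_apply, single, ite_and]

section UpperTriangular

variable [LinearOrder m] [Fintype m]

theorem IsUpperTriangular.mul_apply_self [NonUnitalNonAssocSemiring R] {M N : Matrix m m R}
    (hM : M.IsUpperTriangular) (hN : N.IsUpperTriangular) (i : m) :
    (M * N) i i = M i i * N i i := by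
  rw [mul_apply]
  refine Finset.sum_eq_single i (fun k _ hki => ?_) (by simp)
  rcases hki.lt_or_gt with hki | hki
  · rw [hM hki, zero_mul]
  · rw [hN hki, mul_zero]

theorem IsUpperTriangular.pow_apply_self [Semiring R] {M : Matrix m m R}
    (hM : M.IsUpperTriangular) (k : ℕ) (i : m) : (M ^ k) i i = M i i ^ k := by
  induction k with
  | zero => simp
  | succ k ih => rw [pow_succ, IsUpperTriangular.mul_apply_self (hM.pow k) hM, ih, pow_succ]

theorem IsUpperTriangular.apply_self_eq_zero_of_isNilpotent [Semiring R] [IsReduced R]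
    {M : Matrix m m R} (hM : M.IsUpperTriangular) (hnil : IsNilpotent M) (i : m) : M i i = 0 := by
  obtain ⟨k, hk⟩ := hnil
  exact IsNilpotent.eq_zero ⟨k, by rw [← hM.pow_apply_self, hk, zero_apply]⟩

end UpperTriangular

theorem det_eq_zero_of_zero_block [LinearOrder m] [Fintype m] [LocallyFiniteOrderBot m]
    [CommRing R] {A : Matrix m m R} {a b : m} (hba : b < a)
    (hA : ∀ i k, i < a → b ≤ k → A k i = 0) : A.det = 0 := by
  rw [det_apply]
  refine Finset.sum_eq_zero fun σ _ => ?_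
  obtain ⟨i, hia, hbi⟩ : ∃ i < a, b ≤ σ i := by
    by_contra! h
    have := Finset.card_le_card_of_injOn σ
      (fun i hi => Finset.mem_Iio.2 (h i (Finset.mem_Iio.1 hi))) σ.injective.injOn
    exact (Finset.card_lt_card (Finset.Iio_ssubset_Iio hba)).not_ge this
  rw [Finset.prod_eq_zero (f := fun j => A (σ j) j) (Finset.mem_univ i) (hA i (σ i) hia hbi),
    smul_zero]

end Matrix

section VI

open Matrix

variable {K : Type*} [Field K] {n : ℕ}

theorem memVI_single (I : Set (Fin n)) {i j : Fin n} (hij : i < j) (c : K) :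
    memVI I (single i j c) := by
  have hdiag (a : Fin n) : single i j c a a = 0 :=
    single_apply_of_ne _ _ _ _ _ (by rintro ⟨rfl, rfl⟩; exact hij.false)
  refine ⟨fun a b hba => single_apply_of_ne _ _ _ _ _ ?_, fun a _ => hdiag a,
    fun a _ b _ => by rw [hdiag, hdiag]⟩
  rintro ⟨rfl, rfl⟩
  exact lt_asymm hij hba

theorem memVI_diagonal_indicator (I : Set (Fin n)) :
    memVI I (diagonal (I.indicator (1 : Fin n → K))) :=
  ⟨fun _ _ h => diagonal_apply_ne _ h.ne', fun a ha => by simp [ha],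
    fun a ha b hb => by simp [ha, hb]⟩

theorem isUpperTriangular_of_forall_memVI_conj {I J : Set (Fin n)}
    {A B : Matrix (Fin n) (Fin n) K}
    (hAB : A * B = 1) (hBA : B * A = 1) (h : ∀ M, memVI I M → memVI J (A * M * B)) :
    B.IsUpperTriangular := by
  intro j l hlj
  by_contra hB
  have hblock : ∀ i k, i < j → l ≤ k → A k i = 0 := by
    intro i k hij hlk
    set E : Matrix (Fin n) (Fin n) K := single i j 1
    have hC : memVI J (A * E * B) := h E (memVI_single I hij 1)
    have hEE : E * E = 0 := single_mul_single_of_ne _ _ _ _ hij.ne' _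
    have hnil : IsNilpotent (A * E * B) := ⟨2, by
      rw [pow_two, show A * E * B * (A * E * B) = A * (E * (B * A) * E) * B by noncomm_ring,
        hBA, mul_one, hEE, mul_zero, zero_mul]⟩
    have hCkl : (A * E * B) k l = 0 := by
      rcases hlk.lt_or_eq with hlk | rfl
      · exact hC.1 k l hlk
      · exact IsUpperTriangular.apply_self_eq_zero_of_isNilpotent hC.1 hnil l
    rw [mul_single_mul_apply, mul_one] at hCkl
    exact (mul_eq_zero.1 hCkl).resolve_right hB
  have hdet : A.det * B.det = 1 := by rw [← det_mul, hAB, det_one]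
  rw [det_eq_zero_of_zero_block hlj hblock, zero_mul] at hdet
  exact zero_ne_one hdet

theorem subset_of_forall_memVI_conj {I J : Set (Fin n)} {A B : Matrix (Fin n) (Fin n) K}
    (hAB : A * B = 1) (hA : A.IsUpperTriangular) (hB : B.IsUpperTriangular)
    (h : ∀ M, memVI I M → memVI J (A * M * B)) : I ⊆ J := by
  intro a ha
  by_contra haJ
  set D : Matrix (Fin n) (Fin n) K := diagonal (I.indicator 1)
  have hD : D.IsUpperTriangular := blockTriangular_diagonal _
  have hDa : (A * D * B) a a = 1 := by
    rw [IsUpperTriangular.mul_apply_self (hA.mul hD) hB, hA.mul_apply_self hD,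
      show D a a = 1 by simp [D, ha], mul_one,
      ← hA.mul_apply_self hB, hAB, one_apply_eq]
  exact one_ne_zero (hDa ▸ (h D (memVI_diagonal_indicator I)).2.1 a haJ)

end VI

theorem stmt11_general {K : Type*} [Field K] (n : ℕ) (I J : Set (Fin n)) :
    (∃ P : Matrix (Fin n) (Fin n) K, IsUnit P ∧
        (fun M => P * M * P⁻¹) '' {M : Matrix (Fin n) (Fin n) K | memVI I M} =
          {M : Matrix (Fin n) (Fin n) K | memVI J M}) ↔ I = J := by
  constructor
  · rintro ⟨P, hP, hS⟩
    have hdet : IsUnit P.det := (Matrix.isUnit_iff_isUnit_det P).1 hP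
    have hPPinv := Matrix.mul_nonsing_inv P hdet
    have hPinvP := Matrix.nonsing_inv_mul P hdet
    have fwd : ∀ M, memVI I M → memVI J (P * M * P⁻¹) := fun M hM =>
      hS.subset (Set.mem_image_of_mem _ hM)
    have bwd : ∀ M, memVI J M → memVI I (P⁻¹ * M * P) := by
      intro M hM
      obtain ⟨N, hN, rfl⟩ := hS.symm.subset hM
      rwa [show P⁻¹ * (P * N * P⁻¹) * P = (P⁻¹ * P) * N * (P⁻¹ * P) by noncomm_ring,
        hPinvP, one_mul, mul_one]
    have hP := isUpperTriangular_of_forall_memVI_conj hPinvP hPPinv bwd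
    have hPinv := isUpperTriangular_of_forall_memVI_conj hPPinv hPinvP fwd
    exact (subset_of_forall_memVI_conj hPPinv hP hPinv fwd).antisymm
      (subset_of_forall_memVI_conj hPinvP hPinv hP bwd)
  · rintro rfl
    exact ⟨1, isUnit_one, by simp⟩

/-- `V_I` and `V_J` are similar iff `I = J`. -/
theorem stmt11 {K : Type*} [Field K] (n : ℕ) (I J : Set (Fin n))
    (hI : I.Nonempty) (hJ : J.Nonempty) :
    (∃ P : Matrix (Fin n) (Fin n) K, IsUnit P ∧
        (fun M => P * M * P⁻¹) '' {M : Matrix (Fin n) (Fin n) K | memVI I M} =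
          {M : Matrix (Fin n) (Fin n) K | memVI J M}) ↔ I = J :=
  stmt11_general n I J
end

section
/- Let I and J be non-empty proper subsets of {1,...,n}. The spaces W_I = K·I_n ⊕ K·D_I ⊕ NT_n(K) and W_J = K·I_n ⊕ K·D_J ⊕ NT_n(K) are similar if and only if I = J or I is the complement of J in {1,...,n}. -/
/-!
Every elementary matrix `E_ab` with `a < b` lies in `W_I`, and
`(P E_ab P⁻¹) i j = P i a · P⁻¹ b j`; asking all of these to be upper triangular forces `P`
itself to be upper triangular.
Conjugation by an upper triangular matrix preserves the diagonal of an upper triangular matrix,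
so `P D_I P⁻¹ ∈ W_J` says that the indicator of `I` is constant on `J` and on `Jᶜ`; as `I` is
neither empty nor everything, `I = J` or `I = Jᶜ`. Conversely `W_{Jᶜ} = W_J`.
-/

/-- Membership in `W_I = K·I_n ⊕ K·D_I ⊕ NT_n(K)`: upper triangular, diagonal entries at
positions of `I` are all equal, and diagonal entries outside `I` are all equal. -/
def memWI {K : Type*} [Field K] {n : ℕ} (I : Set (Fin n))
    (M : Matrix (Fin n) (Fin n) K) : Prop :=
  (∀ i j : Fin n, j < i → M i j = 0) ∧ (∀ i ∈ I, ∀ j ∈ I, M i i = M j j) ∧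
    (∀ (i : Fin n), i ∉ I → ∀ (j : Fin n), j ∉ I → M i i = M j j)

namespace Matrix

variable {ι R : Type*} [Fintype ι]

theorem mul_single_mul_apply_s12 [DecidableEq ι] [NonAssocSemiring R] (P Q : Matrix ι ι R)
    (a b i j : ι) : (P * single a b (1 : R) * Q) i j = P i a * Q b j := by
  rw [mul_apply, Finset.sum_eq_single b]
  · rw [mul_single_apply_same, mul_one]
  · intro l _ hl
    rw [mul_single_apply_of_ne (hbj := hl), zero_mul]
  · simp

variable [LinearOrder ι]

theorem IsUpperTriangular.mul_apply_self_s12 [NonUnitalNonAssocSemiring R] {A B : Matrix ι ι R}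
    (hA : A.IsUpperTriangular) (hB : B.IsUpperTriangular) (i : ι) :
    (A * B) i i = A i i * B i i := by
  rw [mul_apply, Finset.sum_eq_single i]
  · intro k _ hk
    rcases hk.lt_or_gt with h | h
    · rw [hA h, zero_mul]
    · rw [hB h, mul_zero]
  · simp

variable [DecidableEq ι] [CommRing R]

theorem IsUpperTriangular.inv {P : Matrix ι ι R} (hP : P.IsUpperTriangular) (hPu : IsUnit P) :
    P⁻¹.IsUpperTriangular :=
  have := hPu.invertible
  blockTriangular_inv_of_blockTriangular hP

theorem IsUpperTriangular.conj_apply_self {P M : Matrix ι ι R} (hP : P.IsUpperTriangular)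
    (hPu : IsUnit P) (hM : M.IsUpperTriangular) (i : ι) : (P * M * P⁻¹) i i = M i i := by
  have hPP : P i i * P⁻¹ i i = 1 := by
    rw [← hP.mul_apply_self_s12 (hP.inv hPu), mul_nonsing_inv P ((isUnit_iff_isUnit_det P).mp hPu),
      one_apply_eq]
  rw [IsUpperTriangular.mul_apply_self_s12 (hP.mul hM) (hP.inv hPu), hP.mul_apply_self_s12 hM]
  linear_combination M i i * hPP

theorem isUpperTriangular_of_conj_single [NoZeroDivisors R] {P : Matrix ι ι R} (hP : IsUnit P)
    (h : ∀ a b, a < b → (P * single a b (1 : R) * P⁻¹).IsUpperTriangular) :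
    P.IsUpperTriangular := by
  intro i₀ j₀ (hji : j₀ < i₀)
  by_contra hne
  -- `P i₀ j₀ ≠ 0` makes `P⁻¹`, hence `P`, block triangular for the cut after `j₀`.
  have hcut : P⁻¹.BlockTriangular (fun k => decide (j₀ < k)) := by
    intro k l hkl
    simp only [Bool.lt_iff, decide_eq_false_iff_not, not_lt, decide_eq_true_eq] at hkl
    have := h j₀ k hkl.2 (hkl.1.trans_lt hji)
    rw [mul_single_mul_apply_s12] at this
    exact (mul_eq_zero.mp this).resolve_left hne
  have := (isUnit_nonsing_inv_iff.mpr hP).invertible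
  have hPcut := blockTriangular_inv_of_blockTriangular hcut
  rw [nonsing_inv_nonsing_inv P ((isUnit_iff_isUnit_det P).mp hP)] at hPcut
  exact hne (hPcut (by simp [Bool.lt_iff, hji]))

end Matrix

theorem Set.eq_or_eq_compl_of_forall_mem_iff {α : Type*} {I J : Set α} (hI : I.Nonempty)
    (hI' : I ≠ Set.univ) (hJ : ∀ x ∈ J, ∀ y ∈ J, x ∈ I ↔ y ∈ I)
    (hJc : ∀ x ∉ J, ∀ y ∉ J, x ∈ I ↔ y ∈ I) : I = J ∨ I = Jᶜ := by
  obtain ⟨x, hx⟩ := hI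
  obtain ⟨y, hy⟩ := (Set.ne_univ_iff_exists_notMem I).mp hI'
  by_cases hxJ : x ∈ J
  · exact .inl (Set.ext fun z => by grind)
  · exact .inr (Set.ext fun z => by grind)

section memWI

variable {K : Type*} [Field K] {n : ℕ}

theorem memWI_compl (I : Set (Fin n)) (M : Matrix (Fin n) (Fin n) K) :
    memWI Iᶜ M ↔ memWI I M := by
  simp only [memWI, Set.mem_compl_iff, not_not]
  tauto

theorem memWI_single (I : Set (Fin n)) {a b : Fin n} (hab : a < b) :
    memWI I (Matrix.single a b (1 : K)) := by
  have hdiag (i : Fin n) : Matrix.single a b (1 : K) i i = 0 :=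
    Matrix.single_apply_of_ne _ _ _ _ _ (fun h => hab.ne (h.1.trans h.2.symm))
  exact ⟨fun i j hji => Matrix.blockTriangular_single (b := id) hab.le 1 hji,
    fun i _ j _ => by rw [hdiag, hdiag], fun i _ j _ => by rw [hdiag, hdiag]⟩

theorem memWI_diagonal_indicator (I : Set (Fin n)) :
    memWI I (Matrix.diagonal (I.indicator 1) : Matrix (Fin n) (Fin n) K) := by
  refine ⟨fun i j hji => Matrix.diagonal_apply_ne _ hji.ne', fun i hi j hj => ?_,
    fun i hi j hj => ?_⟩ <;> simp [hi, hj]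

theorem memWI_conj_iff {J : Set (Fin n)} {P M : Matrix (Fin n) (Fin n) K} (hP : IsUnit P)
    (hPt : P.IsUpperTriangular) (hM : M.IsUpperTriangular) :
    memWI J (P * M * P⁻¹) ↔ memWI J M := by
  simp only [memWI, hPt.conj_apply_self hP hM]
  exact and_congr_left fun _ => iff_of_true ((hPt.mul hM).mul (hPt.inv hP)) hM

theorem eq_or_eq_compl_of_memWI_diagonal_indicator {I J : Set (Fin n)} (hI : I.Nonempty)
    (hI' : I ≠ Set.univ)
    (h : memWI J (Matrix.diagonal (I.indicator 1) : Matrix (Fin n) (Fin n) K)) :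
    I = J ∨ I = Jᶜ := by
  have indicator_eq_iff (x y : Fin n) (hxy : (I.indicator 1 x : K) = I.indicator 1 y) :
      x ∈ I ↔ y ∈ I := by
    by_cases hx : x ∈ I <;> by_cases hy : y ∈ I <;> simp_all
  refine Set.eq_or_eq_compl_of_forall_mem_iff hI hI' (fun x hx y hy => ?_) fun x hx y hy => ?_
  · exact indicator_eq_iff x y (by simpa using h.2.1 x hx y hy)
  · exact indicator_eq_iff x y (by simpa using h.2.2 x hx y hy)

end memWI

theorem stmt12_general {K : Type*} [Field K] (n : ℕ) (I J : Set (Fin n))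
    (hI : I.Nonempty) (hI' : I ≠ Set.univ) :
    (∃ P : Matrix (Fin n) (Fin n) K, IsUnit P ∧
        (fun M => P * M * P⁻¹) '' {M : Matrix (Fin n) (Fin n) K | memWI I M} =
          {M : Matrix (Fin n) (Fin n) K | memWI J M}) ↔ (I = J ∨ I = Jᶜ) := by
  constructor
  · rintro ⟨P, hP, himg⟩
    have hconj (M) (hM : memWI I M) : memWI J (P * M * P⁻¹) := himg.subset ⟨M, hM, rfl⟩
    have hPt : P.IsUpperTriangular :=
      Matrix.isUpperTriangular_of_conj_single hP fun a b hab => (hconj _ (memWI_single I hab)).1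
    have hD := memWI_diagonal_indicator (K := K) I
    exact eq_or_eq_compl_of_memWI_diagonal_indicator hI hI'
      ((memWI_conj_iff hP hPt hD.1).mp (hconj _ hD))
  · rintro (rfl | rfl) <;> refine ⟨1, isUnit_one, ?_⟩
    · simp
    · simp [memWI_compl]

/-- `W_I` and `W_J` are similar iff `I = J` or `I = Jᶜ`. -/
theorem stmt12 {K : Type*} [Field K] (n : ℕ) (I J : Set (Fin n))
    (hI : I.Nonempty) (hI' : I ≠ Set.univ) (hJ : J.Nonempty) (hJ' : J ≠ Set.univ) :
    (∃ P : Matrix (Fin n) (Fin n) K, IsUnit P ∧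
        (fun M => P * M * P⁻¹) '' {M : Matrix (Fin n) (Fin n) K | memWI I M} =
          {M : Matrix (Fin n) (Fin n) K | memWI J M}) ↔ (I = J ∨ I = Jᶜ) :=
  stmt12_general n I J hI hI'
end
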